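/- arXiv:2406.17631 — 6 statements merged into one kernel-verified Lean document; each statement's English description precedes it below -/
import Mathlib

section
/- Let n and k be nonnegative integers and let G be an (n+k+3)-connected graph. If the isolated toughness of G satisfies I(G) > (n+k+4)/(k+3), then G is a ({K₂,C},n)-factor critical avoidable graph; that is, for every vertex subset W ⊆ V(G) with |W| = n and every edge e of G−W, the graph G−W−e has a spanning subgraph each of whose components is either an edge K₂ or a cycle. -/
open SimpleGraph

variable {α β : Type*}

/-- The graph obtained from `G` by deleting the vertices in `S` (an induced subgraph
on the complement of `S`). -/
def SimpleGraph.delVerts (G : SimpleGraph α) (S : Set α) : SimpleGraph ↥(Sᶜ) :=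
  G.induce Sᶜ

/-- The number of isolated vertices of a graph. -/
noncomputable def isoCount (H : SimpleGraph α) : ℕ :=
  Nat.card {v : α // ∀ w, ¬ H.Adj v w}

/-- The number of connected components of a graph. -/
noncomputable def compCount (H : SimpleGraph α) : ℕ :=
  Nat.card H.ConnectedComponent

/-- A graph is `m`-connected if it has more than `m` vertices and stays connected
after deleting any fewer than `m` vertices. -/
def IsMConnected (G : SimpleGraph α) (m : ℕ) : Prop :=
  m < Nat.card α ∧ ∀ S : Set α, S.ncard < m → (G.delVerts S).Connected

/-- `G` has a spanning subgraph each of whose components is `K₂` or a cycle of length ≥ 3. -/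
def HasK2CycleFactor (G : SimpleGraph α) : Prop :=
  ∃ F : SimpleGraph α, F ≤ G ∧ ∀ c : F.ConnectedComponent,
    Nonempty ((F.induce c.supp) ≃g (⊤ : SimpleGraph (Fin 2))) ∨
    ∃ m : ℕ, 3 ≤ m ∧ Nonempty ((F.induce c.supp) ≃g cycleGraph m)

/-- `G` has a spanning subgraph each of whose components is `K₂` or an odd cycle of length ≥ 5. -/
def HasK2OddCycleFactor (G : SimpleGraph α) : Prop :=
  ∃ F : SimpleGraph α, F ≤ G ∧ ∀ c : F.ConnectedComponent,
    Nonempty ((F.induce c.supp) ≃g (⊤ : SimpleGraph (Fin 2))) ∨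
    ∃ m : ℕ, 5 ≤ m ∧ Odd m ∧ Nonempty ((F.induce c.supp) ≃g cycleGraph m)

/-- `B` is (the vertex set of) a block of `H`: a maximal set inducing a connected
subgraph with no cut vertex. -/
def IsBlock (H : SimpleGraph α) (B : Set α) : Prop :=
  ((H.induce B).Connected ∧ ∀ v ∈ B, B = {v} ∨ (H.induce (B \ {v})).Connected) ∧
  ∀ C : Set α, B ⊆ C →
    ((H.induce C).Connected ∧ ∀ v ∈ C, C = {v} ∨ (H.induce (C \ {v})).Connected) → B = C

/-- A triangular cactus: a connected graph each of whose blocks is a triangle;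
by convention the one-vertex graph `K₁` is also a triangular cactus. -/
def IsTriangularCactus (H : SimpleGraph α) : Prop :=
  H.Connected ∧ ((∃ v : α, ∀ w : α, w = v) ∨
    ∀ B : Set α, IsBlock H B → Nonempty ((H.induce B) ≃g (⊤ : SimpleGraph (Fin 3))))

/-- The number of connected components of `H` that are triangular cacti. -/
noncomputable def ctcCount (H : SimpleGraph α) : ℕ :=
  Nat.card {c : H.ConnectedComponent // IsTriangularCactus (H.induce c.supp)}

/-- The join of two graphs: their disjoint union together with all edges between them. -/
def SimpleGraph.join (G₁ : SimpleGraph α) (G₂ : SimpleGraph β) : SimpleGraph (α ⊕ β) where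
  Adj u v := match u, v with
    | Sum.inl a, Sum.inl b => G₁.Adj a b
    | Sum.inr a, Sum.inr b => G₂.Adj a b
    | Sum.inl _, Sum.inr _ => True
    | Sum.inr _, Sum.inl _ => True
  symm := ⟨fun u v => match u, v with
    | Sum.inl _, Sum.inl _ => fun h => G₁.adj_symm h
    | Sum.inr _, Sum.inr _ => fun h => G₂.adj_symm h
    | Sum.inl _, Sum.inr _ => fun _ => trivial
    | Sum.inr _, Sum.inl _ => fun _ => trivial⟩
  loopless := ⟨fun u => by cases u <;> simp⟩

/-- `G` is a `({K₂, C}, n)`-factor critical avoidable graph. -/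
def K2CycleFactorCriticalAvoidable (G : SimpleGraph α) (n : ℕ) : Prop :=
  ∀ W : Set α, W.ncard = n → ∀ u v : α, u ∉ W → v ∉ W → G.Adj u v →
    HasK2CycleFactor ((G.deleteEdges {s(u, v)}).delVerts W)

/-- `G` is a `({K₂, C_{2i+1} | i ≥ 2}, n)`-factor critical avoidable graph. -/
def K2OddCycleFactorCriticalAvoidable (G : SimpleGraph α) (n : ℕ) : Prop :=
  ∀ W : Set α, W.ncard = n → ∀ u v : α, u ∉ W → v ∉ W → G.Adj u v →
    HasK2OddCycleFactor ((G.deleteEdges {s(u, v)}).delVerts W)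

/-!
By Hall's theorem a graph has a `{K₂, C}`-factor as soon as every vertex set `A` has at least
`|A|` neighbours: an injective choice of neighbours `x ↦ f x` then exists, the cycles of `f` are
the components of the factor, and its 2-cycles are edges. If `G − W − uv` has no such factor,
a set `A` violating Hall's condition gives `T = N(A) \ A` and `I = A \ N(A)` with `|T| < |I|`,
and in `G` the vertices of `I` see only `T ∪ W` and the deleted edge `uv`. Connectivity `n + k + 3` forces `|T| ≥ k + 3`, and then
`I \ {v}` gives at least `|T|` isolated vertices of `G − (T ∪ W ∪ {v})`, a set of at most
`|T| + n + 1` vertices, which contradicts `I(G) > (n + k + 4)/(k + 3)`.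
-/

lemma cycleGraph_adj_iff_add_one {m : ℕ} {i j : Fin (m + 2)} :
    (cycleGraph (m + 2)).Adj i j ↔ i + 1 = j ∨ j + 1 = i := by
  rw [cycleGraph_adj, sub_eq_iff_eq_add, sub_eq_iff_eq_add, add_comm 1, add_comm 1]
  tauto

section InjectiveSelfMap

open Function

variable {γ : Type*} {f : γ → γ}

def SimpleGraph.ofSelfMap (f : γ → γ) : SimpleGraph γ :=
  SimpleGraph.fromRel fun a b => f a = b

@[simp]
lemma SimpleGraph.ofSelfMap_adj {a b : γ} :
    (ofSelfMap f).Adj a b ↔ a ≠ b ∧ (f a = b ∨ f b = a) := by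
  simp [ofSelfMap, eq_comm]

lemma SimpleGraph.ofSelfMap_reachable_iterate (a : γ) (i : ℕ) :
    (ofSelfMap f).Reachable a (f^[i] a) := by
  induction i with
  | zero => rfl
  | succ i ih =>
    refine ih.trans ?_
    rw [iterate_succ_apply']
    by_cases h : f^[i] a = f (f^[i] a)
    · rw [← h]
    · exact Adj.reachable (ofSelfMap_adj.mpr ⟨h, Or.inl rfl⟩)

lemma SimpleGraph.ofSelfMap_reachable_iff [Finite γ] (hf : Injective f) {a b : γ} :
    (ofSelfMap f).Reachable a b ↔ ∃ i, f^[i] a = b := by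
  refine ⟨fun h => ?_, fun ⟨i, hi⟩ => hi ▸ ofSelfMap_reachable_iterate a i⟩
  obtain ⟨p⟩ := h
  induction p with
  | nil => exact ⟨0, rfl⟩
  | @cons a c b h _ ih =>
    obtain ⟨i, rfl⟩ := ih
    rcases (ofSelfMap_adj.mp h).2 with rfl | rfl
    · exact ⟨i + 1, iterate_succ_apply _ _ _⟩
    · -- going backwards along `f` is going forwards once around the cycle of `c`
      refine ⟨i + (minimalPeriod f c - 1), ?_⟩
      have hpos := minimalPeriod_pos_of_mem_periodicPts (hf.mem_periodicPts c)
      rw [iterate_add_apply, ← iterate_succ_apply, Nat.succ_eq_add_one,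
        Nat.sub_add_cancel hpos, iterate_minimalPeriod]

lemma SimpleGraph.ofSelfMap_induce_supp_iso [Finite γ] (hf : Injective f) (x : γ) {m : ℕ}
    (hm : minimalPeriod f x = m + 2) :
    Nonempty (cycleGraph (m + 2) ≃g
      (ofSelfMap f).induce ((ofSelfMap f).connectedComponentMk x).supp) := by
  set φ : Fin (m + 2) → γ := fun i => f^[i] x
  have hφ_add_one (i : Fin (m + 2)) : φ (i + 1) = f (φ i) := by
    simp only [φ, Fin.val_add, Fin.val_one, ← hm, iterate_mod_minimalPeriod_eq,
      iterate_succ_apply']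
  have hφ_inj : Injective φ := fun i j h =>
    Fin.ext (iterate_injOn_Iio_minimalPeriod (by simp [hm]) (by simp [hm]) h)
  have hφ_supp (y : γ) : y ∈ ((ofSelfMap f).connectedComponentMk x).supp ↔ ∃ i, φ i = y := by
    rw [ConnectedComponent.mem_supp_iff, ConnectedComponent.eq, reachable_comm,
      ofSelfMap_reachable_iff hf]
    refine ⟨fun ⟨i, hi⟩ => ⟨⟨i % (m + 2), Nat.mod_lt _ (by omega)⟩, ?_⟩, fun ⟨i, hi⟩ => ⟨i, hi⟩⟩
    change f^[i % (m + 2)] x = y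
    rw [← hi, ← hm, iterate_mod_minimalPeriod_eq]
  let e := Equiv.ofBijective (fun i => (⟨φ i, (hφ_supp _).2 ⟨i, rfl⟩⟩ :
      ((ofSelfMap f).connectedComponentMk x).supp))
    ⟨fun i j h => hφ_inj (congrArg Subtype.val h),
      fun y => ((hφ_supp y).1 y.2).imp fun _ h => Subtype.ext h⟩
  refine ⟨⟨e, fun {i j} => ?_⟩⟩
  change (ofSelfMap f).Adj (φ i) (φ j) ↔ _
  rw [ofSelfMap_adj, ← hφ_add_one, ← hφ_add_one, hφ_inj.ne_iff, hφ_inj.eq_iff, hφ_inj.eq_iff,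
    cycleGraph_adj_iff_add_one]
  exact and_iff_right_of_imp (by rintro (rfl | rfl) <;> simp)

theorem hasK2CycleFactor_of_injective_adj [Finite γ] (H : SimpleGraph γ) (hf : Injective f)
    (hadj : ∀ x, H.Adj x (f x)) : HasK2CycleFactor H := by
  refine ⟨ofSelfMap f, fun a b h => ?_, fun c => ?_⟩
  · rcases (ofSelfMap_adj.mp h).2 with rfl | rfl
    exacts [hadj a, (hadj b).symm]
  obtain ⟨x, rfl⟩ := c.exists_rep
  have hp0 : minimalPeriod f x ≠ 0 :=
    (minimalPeriod_pos_of_mem_periodicPts (hf.mem_periodicPts x)).ne'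
  have hp1 : minimalPeriod f x ≠ 1 := fun h =>
    H.ne_of_adj (hadj x) (minimalPeriod_eq_one_iff_isFixedPt.mp h).symm
  obtain ⟨m, hm⟩ : ∃ m, minimalPeriod f x = m + 2 := ⟨minimalPeriod f x - 2, by omega⟩
  obtain ⟨e⟩ := ofSelfMap_induce_supp_iso hf x hm
  rcases m with _ | m
  · rw [zero_add, cycleGraph_two_eq_top] at e
    exact Or.inl ⟨e.symm⟩
  · exact Or.inr ⟨m + 3, by omega, ⟨e.symm⟩⟩

end InjectiveSelfMap

section

open Finset

theorem hasK2CycleFactor_of_card_le {γ : Type*} [Finite γ] (H : SimpleGraph γ)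
    (h : ∀ T I : Finset γ, Disjoint I T → (∀ z ∈ I, ∀ y, H.Adj z y → y ∈ T) → #I ≤ #T) :
    HasK2CycleFactor H := by
  classical
  have := Fintype.ofFinite γ
  suffices hall : ∀ A : Finset γ, #A ≤ #(A.biUnion fun x => H.neighborFinset x) by
    obtain ⟨f, hf, hadj⟩ := (all_card_le_biUnion_card_iff_existsInjective' _).mp hall
    exact hasK2CycleFactor_of_injective_adj H hf fun x => (H.mem_neighborFinset x _).mp (hadj x)
  intro A
  set N := A.biUnion fun x => H.neighborFinset x
  have hN {z y : γ} (hz : z ∈ A) (hzy : H.Adj z y) : y ∈ N :=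
    mem_biUnion.mpr ⟨z, hz, (H.mem_neighborFinset z y).mpr hzy⟩
  have hIT := h (N \ A) (A \ N) disjoint_sdiff_sdiff fun z hz y hzy => by
    rw [mem_sdiff] at hz ⊢
    exact ⟨hN hz.1 hzy, fun hy => hz.2 (hN hy hzy.symm)⟩
  have hA := card_sdiff_add_card_inter A N
  have hN := card_sdiff_add_card_inter N A
  rw [inter_comm] at hN
  omega

theorem hasK2CycleFactor_delVerts_of_card_le {V : Type*} [Finite V] (G : SimpleGraph V)
    (W : Set V)
    (h : ∀ T I : Finset V, (∀ z ∈ I, z ∉ T ∧ z ∉ W) →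
      (∀ z ∈ I, ∀ y, G.Adj z y → y ∈ T ∨ y ∈ W) → #I ≤ #T) :
    HasK2CycleFactor (G.delVerts W) := by
  refine hasK2CycleFactor_of_card_le _ fun T I hIT hnbr => ?_
  let ι := Function.Embedding.subtype (· ∈ Wᶜ)
  rw [← card_map ι, ← card_map ι]
  refine h _ _ (fun z hz => ?_) fun z hz y hzy => ?_
  · obtain ⟨z, hzI, rfl⟩ := mem_map.mp hz
    exact ⟨(mem_map' ι).not.mpr (Finset.disjoint_left.mp hIT hzI), z.2⟩
  · obtain ⟨z, hzI, rfl⟩ := mem_map.mp hz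
    exact or_iff_not_imp_right.mpr fun hy => mem_map.mpr ⟨⟨y, hy⟩, hnbr z hzI _ hzy, rfl⟩

theorem IsMConnected.exists_adj_notMem {V : Type*} {G : SimpleGraph V} [Finite V] {m : ℕ}
    (hG : IsMConnected G m) {S : Set V} (hS : S.ncard < m) {z : V} (hz : z ∉ S) :
    ∃ y ∉ S, G.Adj z y := by
  have hcompl := S.ncard_add_ncard_compl
  have : Nontrivial ↥Sᶜ := Set.nontrivial_coe_sort.mpr
    ((Set.one_lt_ncard_iff_nontrivial).mp (by have := hG.1; omega))
  obtain ⟨⟨y, hy⟩, hzy⟩ := (hG.2 S hS).preconnected.exists_adj_of_nontrivial ⟨z, hz⟩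
  exact ⟨y, hy, hzy⟩

theorem card_le_isoCount {V : Type*} [Finite V] (G : SimpleGraph V) (S : Set V) (J : Finset V)
    (hJ : ∀ z ∈ J, z ∉ S ∧ ∀ y, G.Adj z y → y ∈ S) :
    #J ≤ isoCount (G.delVerts S) := by
  rw [← Nat.card_eq_finsetCard]
  refine Nat.card_le_card_of_injective
    (fun z => ⟨⟨z, (hJ z z.2).1⟩, fun w hw => w.2 ((hJ z z.2).2 w hw)⟩) fun a b hab => ?_
  exact Subtype.ext (congrArg (fun r => (r.1 : V)) hab)

lemma ncard_coe_union_union_le {V : Type*} (T : Finset V) (W S : Set V) :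
    (↑T ∪ W ∪ S).ncard ≤ #T + W.ncard + S.ncard :=
  (Set.ncard_union_le _ _).trans
    (Nat.add_le_add_right ((Set.ncard_union_le _ _).trans_eq (by rw [Set.ncard_coe_finset])) _)

section AvoidedEdge

variable {V : Type*} {G : SimpleGraph V} {W : Set V} {u v : V} {T I : Finset V}

lemma eq_of_adj_of_notMem_of_deleteEdges
    (hnbr : ∀ z ∈ I, ∀ y, (G.deleteEdges {s(u, v)}).Adj z y → y ∈ T ∨ y ∈ W)
    {z y : V} (hz : z ∈ I) (hzy : G.Adj z y) (hyT : y ∉ T) (hyW : y ∉ W) :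
    s(z, y) = s(u, v) := by
  by_contra hne
  rcases hnbr z hz y (deleteEdges_adj.mpr ⟨hzy, hne⟩) with h | h <;> contradiction

variable {n k : ℕ}

theorem add_three_le_card_of_isMConnected [Finite V] (hconn : IsMConnected G (n + k + 3)) (hW : W.ncard = n) (huv : u ≠ v)
    (hTI : #T < #I) (hI : ∀ z ∈ I, z ∉ T ∧ z ∉ W)
    (hnbr : ∀ z ∈ I, ∀ y, (G.deleteEdges {s(u, v)}).Adj z y → y ∈ T ∨ y ∈ W) :
    k + 3 ≤ #T := by
  classical
  by_contra! hT
  have key : ∀ z ∈ I, ∀ S : Set V, z ∉ S → #T + S.ncard < k + 3 →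
      ∃ y ∉ ↑T ∪ W ∪ S, s(z, y) = s(u, v) := by
    intro z hz S hzS hS
    have hcard := ncard_coe_union_union_le T W S
    obtain ⟨y, hy, hzy⟩ := hconn.exists_adj_notMem (S := ↑T ∪ W ∪ S) (z := z) (by omega)
      (by simp [hzS, hI z hz])
    exact ⟨y, hy, eq_of_adj_of_notMem_of_deleteEdges hnbr hz hzy (fun h => hy (by simp [h]))
      (fun h => hy (by simp [h]))⟩
  by_cases hIuv : ∃ z ∈ I, z ≠ u ∧ z ≠ v
  · obtain ⟨z, hz, hzu, hzv⟩ := hIuv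
    obtain ⟨y, -, hzy⟩ := key z hz ∅ (Set.notMem_empty z) (by simpa)
    rcases Sym2.eq_iff.mp hzy with ⟨rfl, -⟩ | ⟨rfl, -⟩ <;> contradiction
  · -- `I ⊆ {u, v}`, so `T` has at most one vertex and the other end of `uv` can be removed too
    push Not at hIuv
    have hI_sub : ∀ z ∈ I, z = u ∨ z = v := fun z hz => or_iff_not_imp_left.mpr (hIuv z hz)
    obtain ⟨z, hz⟩ : I.Nonempty := card_pos.mp (by omega)
    have hI2 : #I ≤ 2 := (card_le_card fun w hw => by simpa using hI_sub w hw).trans card_le_two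
    obtain ⟨y, hy, hzy⟩ := key z hz ({u, v} \ {z}) (by simp) (by
      rw [Set.ncard_sdiff_singleton_of_mem (by simpa using hI_sub z hz), Set.ncard_pair huv]
      omega)
    rcases Sym2.eq_iff.mp hzy with ⟨rfl, rfl⟩ | ⟨rfl, rfl⟩ <;> simp [huv] at hy

theorem card_le_isoCount_delVerts_union_singleton [Finite V] (hTI : #T < #I)
    (hI : ∀ z ∈ I, z ∉ T ∧ z ∉ W)
    (hnbr : ∀ z ∈ I, ∀ y, (G.deleteEdges {s(u, v)}).Adj z y → y ∈ T ∨ y ∈ W) :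
    #T ≤ isoCount (G.delVerts (↑T ∪ W ∪ {v})) := by
  classical
  have hcard : #T ≤ #(I.erase v) := by have := pred_card_le_card_erase (s := I) (a := v); omega
  refine hcard.trans (card_le_isoCount G _ _ fun z hz => ?_)
  obtain ⟨hzv, hzI⟩ := mem_erase.mp hz
  refine ⟨by simp [hzv, hI z hzI], fun y hzy => ?_⟩
  by_contra hy
  have hzy_uv := eq_of_adj_of_notMem_of_deleteEdges hnbr hzI hzy (fun h => hy (by simp [h]))
    (fun h => hy (by simp [h]))
  rcases Sym2.eq_iff.mp hzy_uv with ⟨-, rfl⟩ | ⟨rfl, -⟩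
  exacts [hy (by simp), hzv rfl]

end AvoidedEdge

end

/-- If `G` is `(n+k+3)`-connected and its isolated toughness exceeds
`(n+k+4)/(k+3)` (expressed pointwise: every `S` with at least two isolated vertices in
`G − S` satisfies `(n+k+4)/(k+3) < |S| / i(G−S)`), then `G` is a
`({K₂, C}, n)`-factor critical avoidable graph. -/
theorem statement0 {V : Type*} [Fintype V] (n k : ℕ) (G : SimpleGraph V)
    (hconn : IsMConnected G (n + k + 3))
    (hiso : ∀ S : Set V, 2 ≤ isoCount (G.delVerts S) →
      ((n : ℝ) + k + 4) / ((k : ℝ) + 3) <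
        (S.ncard : ℝ) / (isoCount (G.delVerts S) : ℝ)) :
    K2CycleFactorCriticalAvoidable G n := by
  intro W hW u v _ _ huv
  refine hasK2CycleFactor_delVerts_of_card_le _ _ fun T I hI hnbr => ?_
  by_contra! hTI
  have hT := add_three_le_card_of_isMConnected hconn hW (G.ne_of_adj huv) hTI hI hnbr
  have hi := card_le_isoCount_delVerts_union_singleton hTI hI hnbr
  have hS := ncard_coe_union_union_le T W {v}
  rw [Set.ncard_singleton, hW] at hS
  have htough := hiso (↑T ∪ W ∪ {v}) (by omega)
  set i := isoCount (G.delVerts (↑T ∪ W ∪ {v}))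
  set s := (↑T ∪ W ∪ {v} : Set V).ncard
  rw [div_lt_div_iff₀ (by positivity) (by norm_cast; omega)] at htough
  have hT' : (k : ℝ) + 3 ≤ T.card := by exact_mod_cast hT
  have hi' : (T.card : ℝ) ≤ i := by exact_mod_cast hi
  have hS' : (s : ℝ) ≤ T.card + n + 1 := by exact_mod_cast hS
  nlinarith
end

section
/- Let n and k be nonnegative integers, let G be an (n+k+3)-connected non-complete graph, let W ⊆ V(G) with |W| = n, let e ∈ E(G−W), and set H = G−W−e. If X ⊆ V(H) satisfies i(H−X) ≥ |X| + 1, then |X| ≥ k + 3. -/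
open SimpleGraph

variable {α β : Type*}

/-! If `|X| ≤ k + 2`, then `W ∪ X` has fewer than `n + k + 3` vertices, so in `G − W − X` every
vertex keeps a neighbour, and deleting the single edge `e` can isolate only its endpoints: hence
`i(H − X) ≤ 2` and `|X| ≤ 1`. But then `W ∪ X` together with one more vertex is still too small
to disconnect `G`, so each vertex of `H − X` has a neighbour other than the far endpoint of `e`,
and `i(H − X) = 0`. -/

theorem SimpleGraph.delVerts_deleteEdges_singleton_adj {V : Type*} (G : SimpleGraph V)
    (S : Set V) (e : Sym2 V) {a b : ↥Sᶜ} :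
    ((G.deleteEdges {e}).delVerts S).Adj a b ↔ G.Adj a b ∧ s((a : V), b) ≠ e := by
  simp [delVerts, deleteEdges_adj]

namespace IsMConnected

variable {V : Type*} [Finite V] {G : SimpleGraph V} {m : ℕ}

theorem exists_adj_notMem_s5 (hG : IsMConnected G m) {S : Set V} (hS : S.ncard < m) {w : V}
    (hw : w ∉ S) : ∃ z ∉ S, G.Adj w z := by
  have hcompl : 1 < Sᶜ.ncard := by
    have := Set.ncard_add_ncard_compl S
    have := hG.1
    omega
  obtain ⟨x, hx, hxw⟩ := Set.exists_ne_of_one_lt_ncard hcompl w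
  obtain ⟨p⟩ := (hG.2 S hS).preconnected ⟨w, hw⟩ ⟨x, hx⟩
  cases p with
  | nil => exact absurd rfl hxw
  | @cons _ z _ h _ => exact ⟨z, z.2, h⟩

theorem exists_adj_notMem_ne (hG : IsMConnected G m) {S : Set V} (hS : S.ncard + 1 < m)
    (w x : V) : ∃ z ∉ S, z ≠ x ∧ G.Adj w z := by
  have hT : (insert x S \ {w}).ncard < m :=
    (Set.ncard_sdiff_singleton_le _ _).trans_lt ((Set.ncard_insert_le x S).trans_lt hS)
  obtain ⟨z, hz, hwz⟩ := hG.exists_adj_notMem_s5 hT (fun h => h.2 rfl)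
  have hzw : z ≠ w := hwz.ne.symm
  simp only [Set.mem_sdiff, Set.mem_insert_iff, Set.mem_singleton_iff, not_and, not_not] at hz
  exact ⟨z, fun h => hzw (hz (Or.inr h)), fun h => hzw (hz (Or.inl h)), hwz⟩

theorem mem_of_isolated_delVerts_deleteEdges (hG : IsMConnected G m) {S : Set V}
    (hS : S.ncard < m) (e : Sym2 V) {w : ↥Sᶜ}
    (hiso : ∀ z, ¬ ((G.deleteEdges {e}).delVerts S).Adj w z) : (w : V) ∈ e := by
  obtain ⟨z, hz, hwz⟩ := hG.exists_adj_notMem_s5 hS w.2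
  have : s((w : V), z) = e := by
    by_contra hne
    exact hiso ⟨z, hz⟩ ((delVerts_deleteEdges_singleton_adj G S e).2 ⟨hwz, hne⟩)
  exact this ▸ Sym2.mem_mk_left _ _

theorem isoCount_delVerts_deleteEdges_le_two (hG : IsMConnected G m) {S : Set V}
    (hS : S.ncard < m) (e : Sym2 V) : isoCount ((G.deleteEdges {e}).delVerts S) ≤ 2 := by
  classical
  calc isoCount ((G.deleteEdges {e}).delVerts S) ≤ Nat.card e.toFinset :=
        Nat.card_le_card_of_injective
          (fun w => ⟨w.1, Sym2.mem_toFinset.2 (hG.mem_of_isolated_delVerts_deleteEdges hS e w.2)⟩)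
          (fun a b hab => Subtype.ext (Subtype.ext (congrArg Subtype.val hab :)))
    _ ≤ 2 := by
        rw [Nat.card_eq_finsetCard, Sym2.card_toFinset]
        split_ifs <;> omega

theorem isoCount_delVerts_deleteEdges_eq_zero (hG : IsMConnected G m) {S : Set V}
    (hS : S.ncard + 1 < m) (e : Sym2 V) : isoCount ((G.deleteEdges {e}).delVerts S) = 0 := by
  refine Nat.card_eq_zero.2 (Or.inl ⟨fun ⟨w, hiso⟩ => ?_⟩)
  have hother : ∃ x, ∀ z, s((w : V), z) = e → z = x := by
    by_cases hwe : (w : V) ∈ e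
    · exact ⟨Sym2.Mem.other hwe,
        fun z hz => Sym2.congr_right.1 (hz.trans (Sym2.other_spec hwe).symm)⟩
    · exact ⟨w, fun z hz => absurd (hz ▸ Sym2.mem_mk_left _ _) hwe⟩
  obtain ⟨x, hx⟩ := hother
  obtain ⟨z, hz, hzx, hwz⟩ := hG.exists_adj_notMem_ne hS w x
  exact hiso ⟨z, hz⟩ ((delVerts_deleteEdges_singleton_adj G S e).2 ⟨hwz, fun h => hzx (hx z h)⟩)

end IsMConnected

theorem statement5_general {V : Type*} [Fintype V] (n k : ℕ) (G : SimpleGraph V)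
    (hconn : IsMConnected G (n + k + 3))
    (W : Set V) (hW : W.ncard = n) (u v : V)
    (X : Set V)
    (hX : X.ncard + 1 ≤ isoCount ((G.deleteEdges {s(u, v)}).delVerts (W ∪ X))) :
    k + 3 ≤ X.ncard := by
  by_contra! hsmall
  have hWX : (W ∪ X).ncard ≤ n + X.ncard := hW ▸ Set.ncard_union_le W X
  have hiso_le := hconn.isoCount_delVerts_deleteEdges_le_two (S := W ∪ X) (by omega) s(u, v)
  have hX1 : X.ncard ≤ 1 := by omega
  have hiso_zero := hconn.isoCount_delVerts_deleteEdges_eq_zero (S := W ∪ X) (by omega) s(u, v)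
  omega

/-- With `G` an `(n+k+3)`-connected non-complete graph, `|W| = n`,
`e = uv ∈ E(G−W)` and `H = G−W−e`: if `X ⊆ V(H)` satisfies `i(H−X) ≥ |X| + 1`,
then `|X| ≥ k + 3`. -/
theorem statement5 {V : Type*} [Fintype V] (n k : ℕ) (G : SimpleGraph V)
    (hconn : IsMConnected G (n + k + 3)) (hnc : G ≠ ⊤)
    (W : Set V) (hW : W.ncard = n) (u v : V) (hu : u ∉ W) (hv : v ∉ W) (huv : G.Adj u v)
    (X : Set V) (hXW : Disjoint X W)
    (hX : X.ncard + 1 ≤ isoCount ((G.deleteEdges {s(u, v)}).delVerts (W ∪ X))) :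
    k + 3 ≤ X.ncard :=
  statement5_general n k G hconn W hW u v X hX
end

section
/- Let n and k be nonnegative integers and let G be an (n+k+3)-connected non-complete graph. If there exist W ⊆ V(G) with |W| = n, an edge e ∈ E(G−W), and a set X ⊆ V(G−W−e) such that i((G−W−e)−X) ≥ |X| + 1, then the isolated toughness of G satisfies I(G) ≤ (n+k+4)/(k+3). -/
open SimpleGraph

variable {α β : Type*}

/-!
Let `I` be the set of vertices isolated in `(G - W - uv) - X`. Every `z ∈ I` has all its
`G`-neighbours in `W ∪ X`, except possibly the other end of `uv`; as `G` has minimum degree at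
least `n + k + 3`, this forces `|X| ≥ 2`, hence some `z ∈ I` lies off `uv`, and then
`|X| ≥ k + 3`. Deleting `S = W ∪ X ∪ {v}` from `G` leaves every vertex of `I \ {v}` isolated,
so `i(G - S) ≥ |X|` while `|S| ≤ n + |X| + 1`, and `(n + 1 + x) / x` decreases in `x`.
-/

lemma IsMConnected.le_ncard_neighborSet [Finite α] {G : SimpleGraph α} {m : ℕ}
    (h : IsMConnected G m) (w : α) : m ≤ (G.neighborSet w).ncard := by
  by_contra! hlt
  have hw : w ∈ (G.neighborSet w)ᶜ := G.irrefl
  have : Nontrivial ↥(G.neighborSet w)ᶜ := by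
    rw [Set.nontrivial_coe_sort, ← Set.one_lt_ncard_iff_nontrivial]
    have := Set.ncard_add_ncard_compl (G.neighborSet w)
    have := h.1
    omega
  obtain ⟨y, hy⟩ := (h.2 _ hlt).preconnected.exists_adj_of_nontrivial ⟨w, hw⟩
  exact y.2 hy

def isolatedSet (G : SimpleGraph α) (S : Set α) : Set α :=
  {z | z ∉ S ∧ ∀ w ∉ S, ¬ G.Adj z w}

lemma isoCount_delVerts (G : SimpleGraph α) (S : Set α) :
    isoCount (G.delVerts S) = (isolatedSet G S).ncard := by
  rw [← Nat.card_coe_set_eq]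
  exact Nat.card_congr
    { toFun z := ⟨z.1.1, z.1.2, fun w hw hadj => z.2 ⟨w, hw⟩ hadj⟩
      invFun z := ⟨⟨z.1, z.2.1⟩, fun w hadj => z.2.2 w.1 w.2 hadj⟩
      left_inv _ := rfl
      right_inv _ := rfl }

section deleteEdge

variable {G : SimpleGraph α} {T : Set α} {u v z w : α}

lemma eq_of_mem_isolatedSet_deleteEdges (hz : z ∈ isolatedSet (G.deleteEdges {s(u, v)}) T)
    (hzw : G.Adj z w) (hw : w ∉ T) : s(z, w) = s(u, v) := by
  by_contra hne
  exact hz.2 w hw ((G.deleteEdges_adj ..).2 ⟨hzw, hne⟩)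

lemma neighborSet_subset_of_mem_isolatedSet_deleteEdges
    (hz : z ∈ isolatedSet (G.deleteEdges {s(u, v)}) T) (hzu : z ≠ u) (hzv : z ≠ v) :
    G.neighborSet z ⊆ T := by
  intro w hzw
  by_contra hw
  rcases Sym2.eq_iff.1 (eq_of_mem_isolatedSet_deleteEdges hz hzw hw) with ⟨h, -⟩ | ⟨h, -⟩
  exacts [hzu h, hzv h]

lemma ncard_neighborSet_le_of_mem_isolatedSet_deleteEdges [Finite α]
    (hz : z ∈ isolatedSet (G.deleteEdges {s(u, v)}) T) :
    (G.neighborSet z).ncard ≤ T.ncard + 1 := by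
  have hout : (G.neighborSet z \ T).ncard ≤ 1 := by
    rw [Set.ncard_le_one_iff]
    rintro w w' ⟨hzw, hw⟩ ⟨hzw', hw'⟩
    exact Sym2.congr_right.1 <| (eq_of_mem_isolatedSet_deleteEdges hz hzw hw).trans
      (eq_of_mem_isolatedSet_deleteEdges hz hzw' hw').symm
  calc (G.neighborSet z).ncard ≤ (T ∪ (G.neighborSet z \ T)).ncard :=
        Set.ncard_le_ncard (by simp)
    _ ≤ T.ncard + 1 := (Set.ncard_union_le _ _).trans (by omega)

lemma isolatedSet_deleteEdges_diff_subset :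
    isolatedSet (G.deleteEdges {s(u, v)}) T \ {v} ⊆ isolatedSet G (insert v T) := by
  rintro z ⟨hz, hzv : z ≠ v⟩
  refine ⟨by simp [hzv, hz.1], fun w hw hzw => ?_⟩
  rw [Set.mem_insert_iff, not_or] at hw
  rcases Sym2.eq_iff.1 (eq_of_mem_isolatedSet_deleteEdges hz hzw hw.2) with ⟨-, h⟩ | ⟨h, -⟩
  exacts [hw.1 h, hzv h]

lemma ncard_isolatedSet_deleteEdges_le [Finite α] (G : SimpleGraph α) (T : Set α) (u v : α) :
    (isolatedSet (G.deleteEdges {s(u, v)}) T).ncard ≤ (isolatedSet G (insert v T)).ncard + 1 := by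
  have := Set.pred_ncard_le_ncard_sdiff_singleton (isolatedSet (G.deleteEdges {s(u, v)}) T) v
  have := Set.ncard_le_ncard (@isolatedSet_deleteEdges_diff_subset _ G T u v)
  omega

end deleteEdge

lemma natCast_div_le_of_le_add_of_le {n k x s i : ℕ} (hs : s ≤ n + 1 + x) (hx : k + 3 ≤ x)
    (hi : x ≤ i) :
    (s : ℝ) / i ≤ ((n : ℝ) + k + 4) / ((k : ℝ) + 3) := by
  have hx0 : (0 : ℝ) < x := by exact_mod_cast (by omega : 0 < x)
  calc (s : ℝ) / i ≤ (n + 1 + x) / x :=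
        div_le_div₀ (by positivity) (by exact_mod_cast hs) hx0 (by exact_mod_cast hi)
    _ = (n + 1) / x + 1 := by field_simp
    _ ≤ (n + 1) / (k + 3) + 1 := by gcongr; exact_mod_cast hx
    _ = (n + k + 4) / (k + 3) := by field_simp; ring

theorem statement6_general {V : Type*} [Fintype V] (n k : ℕ) (G : SimpleGraph V)
    (hconn : IsMConnected G (n + k + 3))
    (hex : ∃ (W : Set V) (u v : V) (X : Set V), W.ncard = n ∧ u ∉ W ∧ v ∉ W ∧
      G.Adj u v ∧ Disjoint X W ∧
      X.ncard + 1 ≤ isoCount ((G.deleteEdges {s(u, v)}).delVerts (W ∪ X))) :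
    ∃ S : Set V, 2 ≤ isoCount (G.delVerts S) ∧
      (S.ncard : ℝ) / (isoCount (G.delVerts S) : ℝ) ≤
        ((n : ℝ) + k + 4) / ((k : ℝ) + 3) := by
  obtain ⟨W, u, v, X, hWn, -, -, -, hXW, hiso⟩ := hex
  rw [isoCount_delVerts] at hiso
  set I := isolatedSet (G.deleteEdges {s(u, v)}) (W ∪ X)
  have hdeg := hconn.le_ncard_neighborSet
  have hT : (W ∪ X).ncard = n + X.ncard := by rw [Set.ncard_union_eq hXW.symm, hWn]
  have hX2 : 2 ≤ X.ncard := by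
    obtain ⟨z, hz⟩ := Set.nonempty_of_ncard_ne_zero (by omega : I.ncard ≠ 0)
    linarith [hdeg z, ncard_neighborSet_le_of_mem_isolatedSet_deleteEdges hz]
  obtain ⟨z, hz, hzuv⟩ : ∃ z ∈ I, z ∉ ({u, v} : Set V) :=
    Set.exists_mem_notMem_of_ncard_lt_ncard <| by
      linarith [Set.ncard_insert_le u {v}, Set.ncard_singleton v]
  have hX3 : k + 3 ≤ X.ncard := by
    simp only [Set.mem_insert_iff, Set.mem_singleton_iff, not_or] at hzuv
    linarith [hdeg z, Set.ncard_le_ncard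
      (neighborSet_subset_of_mem_isolatedSet_deleteEdges hz hzuv.1 hzuv.2)]
  have hS : X.ncard ≤ (isolatedSet G (insert v (W ∪ X))).ncard := by
    linarith [ncard_isolatedSet_deleteEdges_le G (W ∪ X) u v]
  refine ⟨insert v (W ∪ X), ?_, ?_⟩ <;> rw [isoCount_delVerts]
  · omega
  · exact natCast_div_le_of_le_add_of_le (by linarith [Set.ncard_insert_le v (W ∪ X)]) hX3 hS

/-- With `G` an `(n+k+3)`-connected non-complete graph: if some `W`
with `|W| = n`, some edge `e = uv` of `G−W` and some `X ⊆ V(G−W−e)` satisfy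
`i((G−W−e)−X) ≥ |X| + 1`, then the isolated toughness of `G` is at most
`(n+k+4)/(k+3)` (expressed by a witness set attaining the bound). -/
theorem statement6 {V : Type*} [Fintype V] (n k : ℕ) (G : SimpleGraph V)
    (hconn : IsMConnected G (n + k + 3)) (hnc : G ≠ ⊤)
    (hex : ∃ (W : Set V) (u v : V) (X : Set V), W.ncard = n ∧ u ∉ W ∧ v ∉ W ∧
      G.Adj u v ∧ Disjoint X W ∧
      X.ncard + 1 ≤ isoCount ((G.deleteEdges {s(u, v)}).delVerts (W ∪ X))) :
    ∃ S : Set V, 2 ≤ isoCount (G.delVerts S) ∧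
      (S.ncard : ℝ) / (isoCount (G.delVerts S) : ℝ) ≤
        ((n : ℝ) + k + 4) / ((k : ℝ) + 3) :=
  statement6_general n k G hconn hex
end

section
/- Let n and k be nonnegative integers and let G be an (n+k+3)-connected non-complete graph. If there exist W ⊆ V(G) with |W| = n, an edge e ∈ E(G−W), and a set X ⊆ V(G−W−e) such that c_tc((G−W−e)−X) ≥ |X| + 1, where c_tc denotes the number of components that are triangular-cacti, then the toughness of G satisfies t(G) ≤ (n+k+4)/(k+3). -/
open SimpleGraph

variable {α β : Type*}

/-! Put `S = W ∪ X`. Deleting the edge `e` creates at most one new component, so `G − S`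
has at least `|X|` components. If `G − S` is disconnected, connectivity forces
`|S| ≥ n + k + 3`, hence `|X| ≥ k + 3` and
`|S| / c(G − S) ≤ (n + |X|) / |X| ≤ (n + k + 4) / (k + 3)`. Otherwise `|X| ≤ 1`.
But `G − e` is `(n + k + 2)`-connected, so `(G − W − e) − X` is connected, which forces
`X = ∅`; then `G − W − e` is a `2`-connected graph on at least four vertices, and such a
graph is not a triangular cactus: it is its own unique block, which is not a triangle. -/

namespace SimpleGraph

lemma connected_induce_induce_iff {H : SimpleGraph α} {B : Set α} {T : Set B} :
    ((H.induce B).induce T).Connected ↔ (H.induce (Subtype.val '' T)).Connected :=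
  Iso.connected_iff
    { toEquiv := Equiv.Set.image Subtype.val T Subtype.val_injective
      map_rel_iff' := Iff.rfl }

lemma connected_delVerts_delVerts_iff {G : SimpleGraph α} {S : Set α} {T : Set ↥Sᶜ} :
    ((G.delVerts S).delVerts T).Connected ↔ (G.delVerts (S ∪ Subtype.val '' T)).Connected := by
  simp only [delVerts]
  rw [connected_induce_induce_iff, Set.image_val_compl, Set.compl_union, Set.sdiff_eq]

lemma compCount_eq_one {H : SimpleGraph α} (h : H.Connected) : compCount H = 1 := by
  have : Nonempty H.ConnectedComponent := h.nonempty.map H.connectedComponentMk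
  have : Subsingleton H.ConnectedComponent :=
    ⟨ConnectedComponent.ind₂ fun x y => ConnectedComponent.sound (h.preconnected x y)⟩
  exact Nat.card_unique

lemma ctcCount_le_compCount [Finite α] (H : SimpleGraph α) : ctcCount H ≤ compCount H :=
  Nat.card_le_card_of_injective Subtype.val Subtype.val_injective

lemma reachable_sup_edge_cases {A : SimpleGraph α} {a b x y : α}
    (h : (A ⊔ edge a b).Reachable x y) :
    A.Reachable x y ∨ (A.Reachable x a ∧ A.Reachable b y) ∨
      (A.Reachable x b ∧ A.Reachable a y) := by
  obtain ⟨p⟩ := h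
  induction p with
  | nil => exact Or.inl .rfl
  | cons hadj _ ih =>
    rcases (sup_adj _ _ _ _).mp hadj with hA | hab
    · rcases ih with h | ⟨h₁, h₂⟩ | ⟨h₁, h₂⟩
      · exact Or.inl (hA.reachable.trans h)
      · exact Or.inr (Or.inl ⟨hA.reachable.trans h₁, h₂⟩)
      · exact Or.inr (Or.inr ⟨hA.reachable.trans h₁, h₂⟩)
    · rcases ((edge_adj _ _ _ _).mp hab).1 with ⟨rfl, rfl⟩ | ⟨rfl, rfl⟩
      · rcases ih with h | ⟨-, h⟩ | ⟨-, h⟩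
        · exact Or.inr (Or.inl ⟨.rfl, h⟩)
        · exact Or.inr (Or.inl ⟨.rfl, h⟩)
        · exact Or.inl h
      · rcases ih with h | ⟨-, h⟩ | ⟨-, h⟩
        · exact Or.inr (Or.inr ⟨.rfl, h⟩)
        · exact Or.inl h
        · exact Or.inr (Or.inr ⟨.rfl, h⟩)

lemma card_connectedComponent_le_sup_edge_add_one [Finite α] (A : SimpleGraph α) (a b : α) :
    Nat.card A.ConnectedComponent ≤ Nat.card (A ⊔ edge a b).ConnectedComponent + 1 := by
  set t := A.connectedComponentMk b
  have hinj :
      Set.InjOn (ConnectedComponent.map (Hom.ofLE (le_sup_left (b := edge a b)))) {t}ᶜ := by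
    intro c hc c' hc' hcc'
    induction c using ConnectedComponent.ind with | h x => ?_
    induction c' using ConnectedComponent.ind with | h y => ?_
    have hx : ¬A.Reachable x b := fun h => hc (ConnectedComponent.sound h)
    have hy : ¬A.Reachable y b := fun h => hc' (ConnectedComponent.sound h)
    rcases reachable_sup_edge_cases (ConnectedComponent.exact hcc') with h | ⟨-, h⟩ | ⟨h, -⟩
    · exact ConnectedComponent.sound h
    · exact absurd h.symm hy
    · exact absurd h hx
  have := Set.ncard_le_ncard_of_injOn _ (fun _ _ => Set.mem_univ _) hinj Set.finite_univ
  have := Set.ncard_add_ncard_compl {t}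
  rw [Set.ncard_univ, Set.ncard_singleton] at *
  omega

lemma compCount_delVerts_deleteEdges_le [Finite α] (G : SimpleGraph α) (S : Set α) (u v : α) :
    compCount ((G.deleteEdges {s(u, v)}).delVerts S) ≤ compCount (G.delVerts S) + 1 := by
  have hle : ∀ x y : ↥Sᶜ, G.Adj x y →
      (G.deleteEdges {s(u, v)}).Adj x y ∨ (x.1 = u ∧ y.1 = v ∨ x.1 = v ∧ y.1 = u) := by
    intro x y hxy
    by_cases he : s(x.1, y.1) = s(u, v)
    · exact Or.inr (Sym2.eq_iff.mp he)
    · exact Or.inl (deleteEdges_adj.mpr ⟨hxy, he⟩)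
  by_cases huv : u ∈ S ∨ v ∈ S
  · have : G.delVerts S ≤ (G.deleteEdges {s(u, v)}).delVerts S := fun x y hxy => by
      have hx := x.2
      have hy := y.2
      rcases hle x y hxy with h | h
      · exact h
      · simp only [Set.mem_compl_iff] at hx hy
        rcases huv with h' | h' <;> aesop
    exact (ConnectedComponent.card_le_card_of_le this).trans (Nat.le_succ _)
  · push Not at huv
    refine (card_connectedComponent_le_sup_edge_add_one _ ⟨u, huv.1⟩ ⟨v, huv.2⟩).trans
      (Nat.add_le_add_right (ConnectedComponent.card_le_card_of_le fun x y hxy => ?_) 1)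
    rcases hle x y hxy with h | h
    · exact Or.inl h
    · refine Or.inr ((edge_adj _ _ _ _).mpr ⟨?_, hxy.ne⟩)
      simpa [Subtype.ext_iff] using h

lemma IsTriangularCactus.ncard_le_three {H : SimpleGraph α} {B : Set α}
    (htc : IsTriangularCactus (H.induce B))
    (hB : ∀ v ∈ B, (H.induce (B \ {v})).Connected) : B.ncard ≤ 3 := by
  rw [← Nat.card_coe_set_eq]
  rcases htc.2 with ⟨v₀, hv₀⟩ | hblocks
  · have : Subsingleton B := ⟨fun x y => (hv₀ x).trans (hv₀ y).symm⟩
    exact Finite.card_le_one_iff_subsingleton.mpr this |>.trans (by norm_num)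
  · have hblock : IsBlock (H.induce B) Set.univ := by
      refine ⟨⟨(induceUnivIso _).connected_iff.mpr htc.1, fun v _ => Or.inr ?_⟩,
        fun C hC _ => (Set.univ_subset_iff.mp hC).symm⟩
      rw [connected_induce_induce_iff, Set.image_sdiff Subtype.val_injective,
        Subtype.coe_image_univ, Set.image_singleton]
      exact hB v v.2
    obtain ⟨e⟩ := hblocks _ hblock
    rw [← Nat.card_univ, Nat.card_congr e.toEquiv, Nat.card_eq_fintype_card, Fintype.card_fin]

def delVertsHomDeleteEdges (G : SimpleGraph α) {S T : Set α} {u v : α} (hST : S ⊆ T)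
    (hT : u ∈ T ∨ v ∈ T) :
    G.delVerts T →g (G.deleteEdges {s(u, v)}).delVerts S where
  toFun x := ⟨x, Set.compl_subset_compl.mpr hST x.2⟩
  map_rel' {x y} hxy := by
    refine deleteEdges_adj.mpr ⟨hxy, fun he => ?_⟩
    have hx := x.2
    have hy := y.2
    simp only [Set.mem_singleton_iff, Sym2.eq_iff] at he
    simp only [Set.mem_compl_iff] at hx hy
    rcases hT with h | h <;> aesop

end SimpleGraph

namespace IsMConnected

variable {G : SimpleGraph α} {m : ℕ}

lemma finite (h : IsMConnected G m) : Finite α :=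
  Nat.finite_of_card_ne_zero (by have := h.1; omega)

lemma connected (h : IsMConnected G m) (hm : 0 < m) : G.Connected := by
  have := h.2 ∅ (by simpa using hm)
  rw [delVerts, Set.compl_empty] at this
  exact (induceUnivIso G).connected_iff.mp this

lemma le_ncard_of_two_le_compCount (h : IsMConnected G m) {S : Set α}
    (hS : 2 ≤ compCount (G.delVerts S)) : m ≤ S.ncard := by
  by_contra! hlt
  have := compCount_eq_one (h.2 S hlt)
  omega

lemma delVerts (h : IsMConnected G m) {S : Set α} {j : ℕ} (hS : S.ncard + j ≤ m) :
    IsMConnected (G.delVerts S) j := by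
  have := h.finite
  refine ⟨?_, fun T hT => connected_delVerts_delVerts_iff.mpr (h.2 _ ?_)⟩
  · have := h.1
    have := Set.ncard_add_ncard_compl S
    rw [Nat.card_coe_set_eq]
    omega
  · calc (S ∪ Subtype.val '' T).ncard ≤ S.ncard + (Subtype.val '' T).ncard :=
          Set.ncard_union_le _ _
      _ = S.ncard + T.ncard := by rw [Set.ncard_image_of_injective _ Subtype.val_injective]
      _ < m := by omega

lemma deleteEdges (h : IsMConnected G (m + 1)) {u v : α} (huv : u ≠ v) :
    IsMConnected (G.deleteEdges {s(u, v)}) m := by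
  have := h.finite
  refine ⟨by have := h.1; omega, fun S hS => ?_⟩
  obtain ⟨w, hwS, hwu, hwv⟩ : ∃ w, w ∉ S ∧ w ≠ u ∧ w ≠ v := by
    by_contra! hall
    have hsub : Sᶜ ⊆ {u, v} := fun w hw => by
      by_cases hwu : w = u
      · exact Or.inl hwu
      · exact Or.inr (hall w hw hwu)
    have := Set.ncard_le_ncard hsub
    rw [Set.ncard_pair huv] at this
    have := Set.ncard_add_ncard_compl S
    have := h.1
    omega
  refine (connected_iff_exists_forall_reachable _).2 ⟨⟨w, hwS⟩, fun y => ?_⟩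
  obtain ⟨z, hz, hyz⟩ : ∃ z, (u = z ∨ v = z) ∧ y.1 ≠ z := by
    by_cases hyu : y.1 = u
    · exact ⟨v, Or.inr rfl, hyu ▸ huv⟩
    · exact ⟨u, Or.inl rfl, hyu⟩
  have hT : (S ∪ {z}).ncard < m + 1 :=
    (Set.ncard_union_le _ _).trans_lt (by rw [Set.ncard_singleton]; omega)
  have hreach := (h.2 _ hT).preconnected ⟨y, fun hy => hy.elim y.2 hyz⟩
    ⟨w, fun hw => hw.elim hwS fun hwz => by rcases hz with rfl | rfl <;> contradiction⟩
  exact (hreach.map (delVertsHomDeleteEdges G Set.subset_union_left (hz.imp Or.inr Or.inr))).symm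

lemma ctcCount_eq_zero (h : IsMConnected G 2) (hcard : 3 < Nat.card α) : ctcCount G = 0 := by
  have := h.finite
  have hconn := h.connected two_pos
  refine Nat.card_eq_zero.mpr (Or.inl ⟨fun ⟨c, hc⟩ => ?_⟩)
  have hsupp : c.supp = Set.univ := by
    induction c using ConnectedComponent.ind with | h x => ?_
    exact Set.eq_univ_of_forall fun v => ConnectedComponent.sound (hconn.preconnected v x)
  have := hc.ncard_le_three fun v _ => by
    rw [hsupp, ← Set.compl_eq_univ_sdiff]
    exact h.2 {v} (by simp)
  rw [hsupp, Set.ncard_univ] at this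
  omega

end IsMConnected

lemma add_div_le_add_four_div_add_three {n k x c : ℕ} (hx : k + 3 ≤ x) (hc : x ≤ c) :
    ((n : ℝ) + x) / c ≤ ((n : ℝ) + k + 4) / ((k : ℝ) + 3) := by
  have hx' : (k : ℝ) + 3 ≤ x := by exact_mod_cast hx
  have hc' : (x : ℝ) ≤ c := by exact_mod_cast hc
  rw [div_le_div_iff₀ (by linarith) (by positivity)]
  nlinarith [(n.cast_nonneg : (0 : ℝ) ≤ n)]

theorem statement8_general {V : Type*} (n k : ℕ) (G : SimpleGraph V)
    (hconn : IsMConnected G (n + k + 3))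
    (hex : ∃ (W : Set V) (u v : V) (X : Set V), W.ncard = n ∧ u ∉ W ∧ v ∉ W ∧
      G.Adj u v ∧ Disjoint X W ∧
      X.ncard + 1 ≤ ctcCount ((G.deleteEdges {s(u, v)}).delVerts (W ∪ X))) :
    ∃ S : Set V, 2 ≤ compCount (G.delVerts S) ∧
      (S.ncard : ℝ) / (compCount (G.delVerts S) : ℝ) ≤
        ((n : ℝ) + k + 4) / ((k : ℝ) + 3) := by
  have := hconn.finite
  obtain ⟨W, u, v, X, hW, -, -, huv, hdisj, hctc⟩ := hex
  set S := W ∪ X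
  have hS : S.ncard = n + X.ncard := by rw [Set.ncard_union_eq hdisj.symm, hW]
  have hctc_le := ctcCount_le_compCount ((G.deleteEdges {s(u, v)}).delVerts S)
  have hcomp : X.ncard ≤ compCount (G.delVerts S) := by
    have := compCount_delVerts_deleteEdges_le G S u v
    omega
  by_cases h2 : 2 ≤ compCount (G.delVerts S)
  · refine ⟨S, h2, ?_⟩
    have hbig := hconn.le_ncard_of_two_le_compCount h2
    rw [hS, Nat.cast_add]
    exact add_div_le_add_four_div_add_three (by omega) hcomp
  · have hGe := hconn.deleteEdges (m := n + k + 2) huv.ne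
    have hX : X.ncard = 0 := by
      have := compCount_eq_one ((hGe.delVerts (S := S) (j := 1) (by omega)).connected one_pos)
      omega
    have hcard : 3 < Nat.card ↥Sᶜ := by
      have := hconn.1
      have := Set.ncard_add_ncard_compl S
      rw [Nat.card_coe_set_eq]
      omega
    have := (hGe.delVerts (S := S) (j := 2) (by omega)).ctcCount_eq_zero hcard
    omega

/-- With `G` an `(n+k+3)`-connected non-complete graph: if some `W`
with `|W| = n`, some edge `e = uv` of `G−W` and some `X ⊆ V(G−W−e)` satisfy
`c_tc((G−W−e)−X) ≥ |X| + 1`, then the toughness of `G` is at most `(n+k+4)/(k+3)`. -/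
theorem statement8 {V : Type*} [Fintype V] (n k : ℕ) (G : SimpleGraph V)
    (hconn : IsMConnected G (n + k + 3)) (hnc : G ≠ ⊤)
    (hex : ∃ (W : Set V) (u v : V) (X : Set V), W.ncard = n ∧ u ∉ W ∧ v ∉ W ∧
      G.Adj u v ∧ Disjoint X W ∧
      X.ncard + 1 ≤ ctcCount ((G.deleteEdges {s(u, v)}).delVerts (W ∪ X))) :
    ∃ S : Set V, 2 ≤ compCount (G.delVerts S) ∧
      (S.ncard : ℝ) / (compCount (G.delVerts S) : ℝ) ≤
        ((n : ℝ) + k + 4) / ((k : ℝ) + 3) :=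
  statement8_general n k G hconn hex
end

section
/- Let n and k be nonnegative integers with n ≥ k+1, and let G = K_{n+k+3} + ((k+2)K₁ ∪ K₂) be the join of the complete graph on n+k+3 vertices with the disjoint union of k+2 isolated vertices and a single edge K₂. Then G is not a ({K₂,C},n)-factor critical avoidable graph: taking W to consist of n vertices of the K_{n+k+3} part and e the edge of the K₂ part, the graph G−W−e has no spanning subgraph each of whose components is an edge K₂ or a cycle. -/
open SimpleGraph

variable {α β : Type*}

/-- The disjoint union of `m` triangles `K₃`. -/
def trianglesGraph (m : ℕ) : SimpleGraph (Fin m × Fin 3) where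
  Adj p q := p.1 = q.1 ∧ p.2 ≠ q.2
  symm := ⟨fun _ _ h => ⟨h.1.symm, fun hh => h.2 hh.symm⟩⟩
  loopless := ⟨fun _ h => h.2 rfl⟩

/-- The graph `K_{n+k+3} + ((k+2)K₁ ∪ K₂)`. -/
def exampleGraph1 (n k : ℕ) :
    SimpleGraph (Fin (n + k + 3) ⊕ (Fin (k + 2) ⊕ Fin 2)) :=
  (⊤ : SimpleGraph (Fin (n + k + 3))).join
    ((⊥ : SimpleGraph (Fin (k + 2))) ⊕g (⊤ : SimpleGraph (Fin 2)))

/-- The graph `K_{n+k+3} + ((k+2)K₃ ∪ K₂)`. -/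
def exampleGraph2 (n k : ℕ) :
    SimpleGraph (Fin (n + k + 3) ⊕ ((Fin (k + 2) × Fin 3) ⊕ Fin 2)) :=
  (⊤ : SimpleGraph (Fin (n + k + 3))).join
    (trianglesGraph (k + 2) ⊕g (⊤ : SimpleGraph (Fin 2)))

/-- The graph `K_{n+k+2} + ((k+1)K₁ ∪ K₂)`. -/
def exampleGraph3 (n k : ℕ) :
    SimpleGraph (Fin (n + k + 2) ⊕ (Fin (k + 1) ⊕ Fin 2)) :=
  (⊤ : SimpleGraph (Fin (n + k + 2))).join
    ((⊥ : SimpleGraph (Fin (k + 1))) ⊕g (⊤ : SimpleGraph (Fin 2)))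

/-!
In a `{K₂, C}`-factor every vertex can be sent injectively to a neighbour: along each cycle to
its successor, along each `K₂` to its partner. Hence a graph with such a factor satisfies the
Hall-type condition `|S| ≤ |T|` whenever every neighbour of a vertex of `S` lies in `T`.
In `G − W − e` the `k + 4` vertices outside the complete part are independent, and all their
neighbours lie among the `k + 3` surviving vertices of `K_{n+k+3}`.
-/

open Function

namespace SimpleGraph

variable {V W : Type*}

theorem Iso.exists_injective_adj {G : SimpleGraph V} {G' : SimpleGraph W} (e : G ≃g G')
    (h : ∃ f : W → W, Injective f ∧ ∀ w, G'.Adj w (f w)) :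
    ∃ f : V → V, Injective f ∧ ∀ v, G.Adj v (f v) := by
  obtain ⟨f, hf, hadj⟩ := h
  refine ⟨e.symm ∘ f ∘ e, e.symm.injective.comp (hf.comp e.injective), fun v => ?_⟩
  rw [← e.map_adj_iff]
  simpa using hadj (e v)

theorem exists_injective_adj_top_fin_two :
    ∃ f : Fin 2 → Fin 2, Injective f ∧ ∀ x, (⊤ : SimpleGraph (Fin 2)).Adj x (f x) :=
  ⟨(· + 1), add_left_injective 1, by decide⟩

theorem exists_injective_adj_cycleGraph {m : ℕ} (hm : 2 ≤ m) :
    ∃ f : Fin m → Fin m, Injective f ∧ ∀ x, (cycleGraph m).Adj x (f x) := by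
  obtain ⟨m, rfl⟩ : ∃ m', m = m' + 2 := ⟨m - 2, by omega⟩
  exact ⟨(· + 1), add_left_injective 1,
    fun x => cycleGraph_adj.mpr (Or.inr (add_sub_cancel_left x 1))⟩

theorem exists_injective_adj_of_forall_connectedComponent {F : SimpleGraph V}
    (h : ∀ c : F.ConnectedComponent,
      ∃ g : c.supp → c.supp, Injective g ∧ ∀ x : c.supp, F.Adj x (g x)) :
    ∃ f : V → V, Injective f ∧ ∀ v, F.Adj v (f v) := by
  choose g hg hadj using h
  let f : V → V := fun v => g (F.connectedComponentMk v) ⟨v, rfl⟩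
  have hf : ∀ v c (hc : F.connectedComponentMk v = c), f v = g c ⟨v, hc⟩ := by
    rintro v c rfl
    rfl
  refine ⟨f, fun v₁ v₂ h => ?_, fun v => hadj _ ⟨v, rfl⟩⟩
  have hcomp : F.connectedComponentMk v₁ = F.connectedComponentMk v₂ := by
    rw [ConnectedComponent.connectedComponentMk_eq_of_adj (hadj _ ⟨v₁, rfl⟩),
      ConnectedComponent.connectedComponentMk_eq_of_adj (hadj _ ⟨v₂, rfl⟩)]
    exact congrArg F.connectedComponentMk h
  rw [hf v₁ _ hcomp, hf v₂ _ rfl] at h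
  exact congrArg Subtype.val (hg _ (Subtype.ext h))

end SimpleGraph

open SimpleGraph

variable {V : Type*}

theorem HasK2CycleFactor.exists_injective_adj {G : SimpleGraph V} (hG : HasK2CycleFactor G) :
    ∃ f : V → V, Injective f ∧ ∀ v, G.Adj v (f v) := by
  obtain ⟨F, hFG, hF⟩ := hG
  obtain ⟨f, hf, hadj⟩ : ∃ f : V → V, Injective f ∧ ∀ v, F.Adj v (f v) := by
    refine exists_injective_adj_of_forall_connectedComponent fun c => ?_
    obtain ⟨⟨e⟩⟩ | ⟨m, hm, ⟨e⟩⟩ := hF c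
    · exact e.exists_injective_adj exists_injective_adj_top_fin_two
    · exact e.exists_injective_adj (exists_injective_adj_cycleGraph (by omega))
  exact ⟨f, hf, fun v => hFG (hadj v)⟩

theorem HasK2CycleFactor.ncard_le_ncard {G : SimpleGraph V} (hG : HasK2CycleFactor G)
    {S T : Set V} (hT : T.Finite) (hST : ∀ v ∈ S, G.neighborSet v ⊆ T) :
    S.ncard ≤ T.ncard := by
  obtain ⟨f, hf, hadj⟩ := hG.exists_injective_adj
  exact Set.ncard_le_ncard_of_injOn f (fun v hv => hST v hv (hadj v)) hf.injOn hT

theorem exampleGraph1_deleteEdges_not_adj_inr_inr {n k : ℕ} (a b : Fin (k + 2) ⊕ Fin 2) :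
    ¬ ((exampleGraph1 n k).deleteEdges {s(Sum.inr (Sum.inr 0), Sum.inr (Sum.inr 1))}).Adj
      (Sum.inr a) (Sum.inr b) := by
  rintro ⟨hadj, hne⟩
  change ((⊥ : SimpleGraph (Fin (k + 2))) ⊕g (⊤ : SimpleGraph (Fin 2))).Adj a b at hadj
  rcases a with a | a <;> rcases b with b | b <;> simp only [sum_adj, bot_adj, top_adj] at hadj
  fin_cases a <;> fin_cases b <;> simp_all [Sym2.eq_swap]

theorem inr_notMem_of_subset_range_inl {α β : Type*} {W : Set (α ⊕ β)}
    (hW : W ⊆ Set.range Sum.inl) (b : β) : Sum.inr b ∉ W := fun hb => by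
  obtain ⟨a, ha⟩ := hW hb
  exact Sum.inl_ne_inr ha

theorem exampleGraph1_not_hasK2CycleFactor {n k : ℕ}
    {W : Set (Fin (n + k + 3) ⊕ (Fin (k + 2) ⊕ Fin 2))} (hW : W ⊆ Set.range Sum.inl)
    (hWcard : W.ncard = n) :
    ¬ HasK2CycleFactor (((exampleGraph1 n k).deleteEdges
      {s(Sum.inr (Sum.inr 0), Sum.inr (Sum.inr 1))}).delVerts W) := by
  intro hG
  have hinr : Set.range Sum.inr ⊆ Wᶜ := by
    rintro _ ⟨b, rfl⟩
    exact inr_notMem_of_subset_range_inl hW b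
  have hle := hG.ncard_le_ncard (S := Subtype.val ⁻¹' Set.range Sum.inr)
    (T := Subtype.val ⁻¹' (Set.range Sum.inl \ W)) (Set.toFinite _) <| by
    rintro ⟨_, _⟩ ⟨b, rfl⟩ ⟨w | w, hw⟩ hvw
    · exact ⟨⟨w, rfl⟩, hw⟩
    · exact (exampleGraph1_deleteEdges_not_adj_inr_inr b w hvw).elim
  rw [Set.ncard_preimage_of_injective_subset_range Subtype.val_injective
      (by rwa [Subtype.range_coe]),
    Set.ncard_preimage_of_injective_subset_range Subtype.val_injective
      (by rw [Subtype.range_coe]; exact fun _ hx => hx.2),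
    Set.ncard_range_of_injective Sum.inr_injective, Set.ncard_sdiff hW,
    Set.ncard_range_of_injective Sum.inl_injective, hWcard] at hle
  simp only [Nat.card_eq_fintype_card, Fintype.card_sum, Fintype.card_fin] at hle
  omega

theorem statement12_general (n k : ℕ) :
    (∀ W : Set (Fin (n + k + 3) ⊕ (Fin (k + 2) ⊕ Fin 2)),
      W ⊆ Set.range Sum.inl → W.ncard = n →
      ¬ HasK2CycleFactor (((exampleGraph1 n k).deleteEdges
        {s(Sum.inr (Sum.inr 0), Sum.inr (Sum.inr 1))}).delVerts W)) ∧
    ¬ K2CycleFactorCriticalAvoidable (exampleGraph1 n k) n := by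
  refine ⟨fun W hW hWcard => exampleGraph1_not_hasK2CycleFactor hW hWcard, fun hG => ?_⟩
  obtain ⟨W, hW, hWcard⟩ := Set.exists_subset_card_eq (n := n)
    (s := Set.range (Sum.inl : Fin (n + k + 3) → Fin (n + k + 3) ⊕ (Fin (k + 2) ⊕ Fin 2))) <| by
    rw [Set.ncard_range_of_injective Sum.inl_injective, Nat.card_eq_fintype_card,
      Fintype.card_fin]
    omega
  exact exampleGraph1_not_hasK2CycleFactor hW hWcard <| hG W hWcard _ _
    (inr_notMem_of_subset_range_inl hW _) (inr_notMem_of_subset_range_inl hW _)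
    (by simp [exampleGraph1, join])

/-- For `n ≥ k+1`, the graph `G = K_{n+k+3} + ((k+2)K₁ ∪ K₂)` is not
a `({K₂,C}, n)`-factor critical avoidable graph: for any `W` consisting of `n` vertices
of the `K_{n+k+3}` part and `e` the edge of the `K₂` part, `G−W−e` has no
`{K₂,C}`-factor. -/
theorem statement12 (n k : ℕ) (hnk : k + 1 ≤ n) :
    (∀ W : Set (Fin (n + k + 3) ⊕ (Fin (k + 2) ⊕ Fin 2)),
      W ⊆ Set.range Sum.inl → W.ncard = n →
      ¬ HasK2CycleFactor (((exampleGraph1 n k).deleteEdges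
        {s(Sum.inr (Sum.inr 0), Sum.inr (Sum.inr 1))}).delVerts W)) ∧
    ¬ K2CycleFactorCriticalAvoidable (exampleGraph1 n k) n :=
  statement12_general n k
end

section
/- Let n and k be nonnegative integers with n ≥ k+1, and let G = K_{n+k+3} + ((k+2)K₃ ∪ K₂) be the join of the complete graph on n+k+3 vertices with the disjoint union of k+2 triangles K₃ and a single edge K₂. Then G is not a ({K₂, odd cycles of length ≥ 5}, n)-factor critical avoidable graph: taking W to consist of n vertices of the K_{n+k+3} part and e the edge of the K₂ part, and X the remaining k+3 vertices of the K_{n+k+3} part, one has c_tc((G−W−e)−X) = k+4 > k+3 = |X|, so G−W−e has no spanning subgraph each of whose components is an edge K₂ or an odd cycle of length at least 5. -/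
open SimpleGraph

variable {α β : Type*}

/-!
Orient each component of a `{K₂, C_{2i+1} | i ≥ 2}`-factor as a cycle (an edge as a 2-cycle) and let
`σ` send a vertex to its successor. Then `σ` is injective, moves every vertex along an edge, and
every `σ`-invariant vertex set is a union of factor components, so it has even size or at least
five vertices. In `G − W − e` the `k + 2` triangles and the two ends of `e` are pieces of odd size
below five whose only neighbours outside themselves lie in the set `X` of the `k + 3` remaining
clique vertices. So each piece has a vertex whose successor is in `X`, and these `k + 4` successors
are distinct. Deleting `X` leaves exactly those `k + 4` pieces, each a triangle or a single vertex.
-/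

open Function

theorem Fin.mem_of_add_one_mem {m : ℕ} {T : Set (Fin (m + 1))} (hT : ∀ i ∈ T, i + 1 ∈ T)
    {a : Fin (m + 1)} (ha : a ∈ T) (b : Fin (m + 1)) : b ∈ T := by
  have hreach : ∀ j : Fin (m + 1), a + j ∈ T := by
    intro j
    induction j using Fin.induction with
    | zero => simpa using ha
    | succ j ih => simpa [← Fin.coeSucc_eq_succ, ← add_assoc] using hT _ ih
  simpa using hreach (b - a)

theorem cycleGraph_adj_add_one {m : ℕ} (i : Fin (m + 2)) : (cycleGraph (m + 2)).Adj i (i + 1) :=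
  cycleGraph_adj.mpr (Or.inr (add_sub_cancel_left i 1))

section Cactus

variable {ι : Type*}

theorem isTriangularCactus_top [Finite α] (h : Nat.card α = 1 ∨ Nat.card α = 3) :
    IsTriangularCactus (⊤ : SimpleGraph α) := by
  have : Nonempty α := (Nat.card_pos_iff.mp (by omega)).1
  refine ⟨connected_top, ?_⟩
  rcases h with h1 | h3
  · obtain ⟨_, ⟨v⟩⟩ := Nat.card_eq_one_iff_unique.mp h1
    exact Or.inl ⟨v, fun w => Subsingleton.elim w v⟩
  · have : Nontrivial α := Finite.one_lt_card_iff_nontrivial.mp (by omega)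
    refine Or.inr fun B hB => ?_
    have hdel : ∀ v : α, ((⊤ : SimpleGraph α).induce (Set.univ \ {v})).Connected := by
      intro v
      obtain ⟨w, hw⟩ := exists_ne v
      have : Nonempty ↥(Set.univ \ {v}) := ⟨⟨w, trivial, hw⟩⟩
      simp
    obtain rfl : B = Set.univ :=
      hB.2 _ (Set.subset_univ B) ⟨by simp, fun v _ => Or.inr (hdel v)⟩
    rw [induce_top]
    exact ⟨Iso.completeGraph (Finite.equivFinOfCardEq (by simpa using h3))⟩

variable {H : SimpleGraph α} {f : α → ι}

theorem reachable_iff_of_adj_iff (hadj : ∀ u v, u ≠ v → (H.Adj u v ↔ f u = f v)) {u v : α} :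
    H.Reachable u v ↔ f u = f v := by
  constructor
  · rintro ⟨p⟩
    induction p with
    | nil => rfl
    | @cons u w _ huw _ ih => exact ((hadj u w huw.ne).mp huw).trans ih
  · intro h
    by_cases huv : u = v
    · exact huv ▸ Reachable.refl u
    · exact ((hadj u v huv).mpr h).reachable

theorem ctcCount_eq_of_adj_iff [Finite α] (hadj : ∀ u v, u ≠ v → (H.Adj u v ↔ f u = f v))
    (hsurj : Surjective f) (hfib : ∀ i, (f ⁻¹' {i}).ncard = 1 ∨ (f ⁻¹' {i}).ncard = 3) :
    ctcCount H = Nat.card ι := by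
  have hsupp : ∀ v, (H.connectedComponentMk v).supp = f ⁻¹' {f v} := by
    intro v
    ext w
    simp [ConnectedComponent.eq, reachable_iff_of_adj_iff hadj]
  have hcactus : ∀ c : H.ConnectedComponent, IsTriangularCactus (H.induce c.supp) := by
    refine ConnectedComponent.ind fun v => ?_
    have htop : H.induce (H.connectedComponentMk v).supp = ⊤ := by
      ext x y
      have hx : f x = f v := by simpa [hsupp] using x.2
      have hy : f y = f v := by simpa [hsupp] using y.2
      simp only [comap_adj, Embedding.coe_subtype, top_adj]
      exact ⟨fun h hxy => h.ne (congrArg Subtype.val hxy),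
        fun hxy => (hadj _ _ (Subtype.coe_injective.ne hxy)).mpr (hx.trans hy.symm)⟩
    rw [htop]
    apply isTriangularCactus_top
    rw [Nat.card_coe_set_eq, hsupp]
    exact hfib _
  let e : H.ConnectedComponent ≃ ι := Equiv.ofBijective
    (ConnectedComponent.lift f fun _ _ p _ => (reachable_iff_of_adj_iff hadj).mp p.reachable)
    ⟨fun c d => ConnectedComponent.ind₂ (fun u v h => ConnectedComponent.sound
      ((reachable_iff_of_adj_iff hadj).mpr h)) c d,
     fun i => (hsurj i).elim fun v hv => ⟨H.connectedComponentMk v, hv⟩⟩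
  rw [ctcCount, Nat.card_congr (Equiv.subtypeUnivEquiv hcactus), Nat.card_congr e]

end Cactus

section Factor

theorem HasK2OddCycleFactor.exists_iso_cycleGraph {G : SimpleGraph α}
    (h : HasK2OddCycleFactor G) :
    ∃ F ≤ G, ∃ m : F.ConnectedComponent → ℕ, (∀ c, m c = 0 ∨ 3 ≤ m c) ∧
      Nonempty (∀ c, F.induce c.supp ≃g cycleGraph (m c + 2)) := by
  obtain ⟨F, hFG, hcomp⟩ := h
  have hcyc : ∀ c : F.ConnectedComponent, ∃ m, (m = 0 ∨ 3 ≤ m) ∧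
      Nonempty (F.induce c.supp ≃g cycleGraph (m + 2)) := by
    intro c
    rcases hcomp c with hK₂ | ⟨m, hm, -, hC⟩
    · exact ⟨0, Or.inl rfl, cycleGraph_two_eq_top ▸ hK₂⟩
    · obtain ⟨m, rfl⟩ : ∃ m', m = m' + 2 := ⟨m - 2, by omega⟩
      exact ⟨m, Or.inr (by omega), hC⟩
  choose m hm φ using hcyc
  exact ⟨F, hFG, m, hm, ⟨fun c => (φ c).some⟩⟩

theorem exists_successor_of_iso_cycleGraph {F : SimpleGraph α} {m : F.ConnectedComponent → ℕ}
    (φ : ∀ c, F.induce c.supp ≃g cycleGraph (m c + 2)) :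
    ∃ σ : α → α, Injective σ ∧ (∀ v, F.Adj v (σ v)) ∧
      ∀ S : Set α, Set.MapsTo σ S S → ∀ v ∈ S, ∀ w, F.Reachable v w → w ∈ S := by
  let σ : α → α := fun v => ((φ _).symm (φ (F.connectedComponentMk v) ⟨v, rfl⟩ + 1)).1
  have hσ : ∀ (c : F.ConnectedComponent) (x : c.supp), σ x = ((φ c).symm (φ c x + 1)).1 := by
    rintro c ⟨v, hv⟩
    rw [ConnectedComponent.mem_supp_iff] at hv
    subst hv
    rfl
  have hσmem : ∀ (c : F.ConnectedComponent) (x : c.supp), σ x ∈ c.supp :=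
    fun c x => hσ c x ▸ Subtype.prop _
  refine ⟨σ, fun v w hvw => ?_, fun v => ?_, fun S hS v hv w hvw => ?_⟩
  · let c := F.connectedComponentMk v
    have hw : w ∈ c.supp := by
      have h := hσmem _ (⟨w, rfl⟩ : (F.connectedComponentMk w).supp)
      rw [← hvw, ConnectedComponent.mem_supp_iff, hσmem c ⟨v, rfl⟩] at h
      exact h.symm
    rw [hσ c ⟨v, rfl⟩, hσ c ⟨w, hw⟩, Subtype.coe_inj] at hvw
    exact congrArg Subtype.val ((φ c).injective (add_right_cancel ((φ c).symm.injective hvw)))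
  · simpa using (φ _).symm.map_adj_iff.mpr (cycleGraph_adj_add_one (φ _ ⟨v, rfl⟩))
  · let c := F.connectedComponentMk v
    have hw : w ∈ c.supp := (ConnectedComponent.sound hvw).symm
    have hcycle := Fin.mem_of_add_one_mem (T := {i | ((φ c).symm i).1 ∈ S})
      (fun i hi => by simpa [hσ c] using hS hi)
      (a := φ c ⟨v, rfl⟩) (by simpa using hv) (φ c ⟨w, hw⟩)
    simpa using hcycle

theorem even_or_five_le_ncard_of_reachable_closed [Finite α] {F : SimpleGraph α}
    (hF : ∀ c : F.ConnectedComponent, Nat.card c.supp = 2 ∨ 5 ≤ Nat.card c.supp) {S : Set α}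
    (hS : ∀ v ∈ S, ∀ w, F.Reachable v w → w ∈ S) : Even S.ncard ∨ 5 ≤ S.ncard := by
  classical
  have := Fintype.ofFinite α
  have hfiber : ∀ c ∈ S.toFinset.image F.connectedComponentMk,
      (S.toFinset.filter (F.connectedComponentMk · = c)).card = Nat.card c.supp := by
    intro c hc
    obtain ⟨v, hv, rfl⟩ := Finset.mem_image.mp hc
    rw [Nat.card_coe_set_eq, Set.ncard_eq_toFinset_card']
    congr 1
    ext w
    simp only [Finset.mem_filter, Set.mem_toFinset, ConnectedComponent.mem_supp_iff,
      and_iff_right_iff_imp]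
    exact fun hw => hS v (Set.mem_toFinset.mp hv) w (ConnectedComponent.exact hw.symm)
  have hsum : S.ncard = ∑ c ∈ S.toFinset.image F.connectedComponentMk, Nat.card c.supp := by
    rw [Set.ncard_eq_toFinset_card', Finset.card_eq_sum_card_fiberwise
      (f := F.connectedComponentMk) (fun v hv => Finset.mem_image_of_mem _ hv)]
    exact Finset.sum_congr rfl hfiber
  by_cases hbig : ∃ c ∈ S.toFinset.image F.connectedComponentMk, 5 ≤ Nat.card c.supp
  · obtain ⟨c, hc, h5⟩ := hbig
    exact Or.inr (hsum ▸ h5.trans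
      (Finset.single_le_sum (f := fun c => Nat.card c.supp) (fun _ _ => Nat.zero_le _) hc))
  · push Not at hbig
    refine Or.inl (hsum ▸ Finset.even_sum _ fun c hc => ?_)
    rw [(hF c).resolve_right (hbig c hc).not_ge]
    exact even_two

theorem HasK2OddCycleFactor.card_le_ncard [Finite α] {ι : Type*} {G : SimpleGraph α}
    (h : HasK2OddCycleFactor G) (X : Set α) (P : ι → Set α) (hdisj : Pairwise (Disjoint on P))
    (hP : ∀ i, ∀ u ∈ P i, ∀ v, G.Adj u v → v ∈ P i ∨ v ∈ X)
    (hodd : ∀ i, Odd (P i).ncard ∧ (P i).ncard < 5) :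
    Nat.card ι ≤ X.ncard := by
  obtain ⟨F, hFG, m, hm, ⟨φ⟩⟩ := h.exists_iso_cycleGraph
  obtain ⟨σ, hσinj, hσadj, hσclosed⟩ := exists_successor_of_iso_cycleGraph φ
  have hcard : ∀ c : F.ConnectedComponent, Nat.card c.supp = 2 ∨ 5 ≤ Nat.card c.supp := by
    intro c
    rw [Nat.card_congr (φ c).toEquiv, Nat.card_fin]
    have := hm c
    omega
  have hexit : ∀ i, ∃ v ∈ P i, σ v ∈ X := by
    intro i
    by_contra! hstay
    have hmaps : Set.MapsTo σ (P i) (P i) := fun v hv =>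
      (hP i v hv (σ v) (hFG (hσadj v))).resolve_right (hstay v hv)
    rcases even_or_five_le_ncard_of_reachable_closed hcard (hσclosed _ hmaps) with h | h
    · exact Nat.not_even_iff_odd.mpr (hodd i).1 h
    · exact absurd (hodd i).2 h.not_gt
  choose g hgP hgX using hexit
  calc Nat.card ι ≤ Nat.card X :=
        Nat.card_le_card_of_injective (fun i => ⟨σ (g i), hgX i⟩) fun i j hij => by
          by_contra hne
          exact Set.disjoint_left.mp (hdisj hne) (hgP i)
            (hσinj (congrArg Subtype.val hij) ▸ hgP j)
    _ = X.ncard := Nat.card_coe_set_eq X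

end Factor

section Example

variable {n k : ℕ}

abbrev exampleGraph2MinusEdge (n k : ℕ) :
    SimpleGraph (Fin (n + k + 3) ⊕ ((Fin (k + 2) × Fin 3) ⊕ Fin 2)) :=
  (exampleGraph2 n k).deleteEdges {s(Sum.inr (Sum.inr 0), Sum.inr (Sum.inr 1))}

/-- Indexes the components of `(k+2)K₃ ∪ 2K₁`, the side of `exampleGraph2MinusEdge n k` opposite
the clique. -/
def sideComponent (k : ℕ) : (Fin (k + 2) × Fin 3) ⊕ Fin 2 → Fin (k + 2) ⊕ Fin 2 :=
  Sum.map Prod.fst id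

theorem sideComponent_surjective : Surjective (sideComponent k) := by
  rintro (i | t)
  exacts [⟨Sum.inl (i, 0), rfl⟩, ⟨Sum.inr t, rfl⟩]

theorem ncard_sideComponent_preimage (i : Fin (k + 2) ⊕ Fin 2) :
    (sideComponent k ⁻¹' {i}).ncard = 1 ∨ (sideComponent k ⁻¹' {i}).ncard = 3 := by
  rcases i with i | t
  · refine Or.inr (Set.ncard_eq_three.mpr
      ⟨Sum.inl (i, 0), Sum.inl (i, 1), Sum.inl (i, 2), by simp, by simp, by simp, ?_⟩)
    ext (⟨i', j⟩ | t)
    · fin_cases j <;> simp [sideComponent, eq_comm]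
    · simp [sideComponent]
  · refine Or.inl (Set.ncard_eq_one.mpr ⟨Sum.inr t, ?_⟩)
    ext (⟨i', j⟩ | t') <;> simp [sideComponent]

theorem exampleGraph2MinusEdge_adj_inr {u v : (Fin (k + 2) × Fin 3) ⊕ Fin 2} (huv : u ≠ v) :
    (exampleGraph2MinusEdge n k).Adj (Sum.inr u) (Sum.inr v) ↔
      sideComponent k u = sideComponent k v := by
  rcases u with ⟨i, j⟩ | t <;> rcases v with ⟨i', j'⟩ | t'
  · simp_all [exampleGraph2, SimpleGraph.join, trianglesGraph, sideComponent]
  · simp [exampleGraph2, SimpleGraph.join, sideComponent]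
  · simp [exampleGraph2, SimpleGraph.join, sideComponent]
  · have htt' : t ≠ t' := fun h => huv (h ▸ rfl)
    simp only [exampleGraph2, SimpleGraph.join, deleteEdges_adj]
    fin_cases t <;> fin_cases t' <;> simp_all [sideComponent]

theorem ctcCount_exampleGraph2MinusEdge_delVerts_range_inl :
    ctcCount ((exampleGraph2MinusEdge n k).delVerts (Set.range Sum.inl)) = k + 4 := by
  let e : ↥(Set.range (Sum.inl : Fin (n + k + 3) → _))ᶜ ≃ (Fin (k + 2) × Fin 3) ⊕ Fin 2 :=
    (Equiv.setCongr Set.compl_range_inl).trans (Equiv.Set.rangeInr _ _)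
  have he : ∀ v, v.1 = Sum.inr (e v) := by
    intro v
    obtain ⟨y, rfl⟩ := e.symm.surjective v
    simp [e]
  rw [ctcCount_eq_of_adj_iff (f := sideComponent k ∘ e) ?_
    (sideComponent_surjective.comp e.surjective) ?_]
  · simp
  · intro u v huv
    simp only [delVerts, comap_adj, Embedding.coe_subtype, comp_apply, he u, he v]
    exact exampleGraph2MinusEdge_adj_inr (e.injective.ne huv)
  · intro i
    rw [Set.preimage_comp, Set.ncard_preimage_of_injective_subset_range e.injective (by simp)]
    exact ncard_sideComponent_preimage i

theorem not_hasK2OddCycleFactor_exampleGraph2MinusEdge_delVerts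
    {W : Set (Fin (n + k + 3) ⊕ ((Fin (k + 2) × Fin 3) ⊕ Fin 2))} (hW : W ⊆ Set.range Sum.inl)
    (hWn : W.ncard = n) :
    ¬ HasK2OddCycleFactor ((exampleGraph2MinusEdge n k).delVerts W) := by
  intro hfactor
  let X : Set ↥Wᶜ := Subtype.val ⁻¹' (Set.range Sum.inl \ W)
  let P (i : Fin (k + 2) ⊕ Fin 2) : Set ↥Wᶜ :=
    Subtype.val ⁻¹' (Sum.inr '' (sideComponent k ⁻¹' {i}))
  have hX : X.ncard = k + 3 := by
    rw [Set.ncard_preimage_of_injective_subset_range Subtype.val_injective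
        (fun v hv => by simpa using hv.2),
      Set.ncard_sdiff hW, Set.ncard_range_of_injective Sum.inl_injective, hWn, Nat.card_fin]
    omega
  have hP : ∀ i, (P i).ncard = (sideComponent k ⁻¹' {i}).ncard := by
    intro i
    rw [Set.ncard_preimage_of_injective_subset_range Subtype.val_injective,
      Set.ncard_image_of_injective _ Sum.inr_injective]
    rintro _ ⟨y, -, rfl⟩
    refine ⟨⟨Sum.inr y, fun hy => ?_⟩, rfl⟩
    obtain ⟨x, hx⟩ := hW hy
    exact Sum.inl_ne_inr hx
  have hclosed : ∀ i, ∀ u ∈ P i, ∀ v, ((exampleGraph2MinusEdge n k).delVerts W).Adj u v →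
      v ∈ P i ∨ v ∈ X := by
    rintro i u ⟨y, hy, hyu⟩ v huv
    rcases hv : v.1 with x | y'
    · exact Or.inr ⟨⟨x, hv.symm⟩, v.2⟩
    · have hadj : (exampleGraph2MinusEdge n k).Adj u.1 v.1 := huv
      rw [← hyu, hv] at hadj
      refine Or.inl ⟨y', ?_, hv.symm⟩
      rw [Set.mem_preimage, Set.mem_singleton_iff] at hy ⊢
      rw [← hy]
      exact ((exampleGraph2MinusEdge_adj_inr fun h => hadj.ne (congrArg Sum.inr h)).mp hadj).symm
  have hcard := hfactor.card_le_ncard X P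
    (fun i j hij => ((Set.disjoint_image_iff Sum.inr_injective).mpr
      ((Set.disjoint_singleton.mpr hij).preimage _)).preimage _)
    hclosed fun i => by
      rw [hP]
      rcases ncard_sideComponent_preimage i with h | h <;> rw [h] <;> decide
  rw [hX, Nat.card_sum, Nat.card_fin, Nat.card_fin] at hcard
  omega

end Example

theorem statement16_general (n k : ℕ) :
    (∀ W X : Set (Fin (n + k + 3) ⊕ ((Fin (k + 2) × Fin 3) ⊕ Fin 2)),
      W ⊆ Set.range Sum.inl → X ⊆ Set.range Sum.inl → Disjoint W X →
      W.ncard = n → X.ncard = k + 3 → W ∪ X = Set.range Sum.inl →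
      ctcCount (((exampleGraph2 n k).deleteEdges
          {s(Sum.inr (Sum.inr 0), Sum.inr (Sum.inr 1))}).delVerts (W ∪ X)) = k + 4 ∧
      ¬ HasK2OddCycleFactor (((exampleGraph2 n k).deleteEdges
          {s(Sum.inr (Sum.inr 0), Sum.inr (Sum.inr 1))}).delVerts W)) ∧
    ¬ K2OddCycleFactorCriticalAvoidable (exampleGraph2 n k) n := by
  refine ⟨fun W X hW _ _ hWn _ hWX => ⟨hWX ▸ ctcCount_exampleGraph2MinusEdge_delVerts_range_inl,
    not_hasK2OddCycleFactor_exampleGraph2MinusEdge_delVerts hW hWn⟩, fun hcrit => ?_⟩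
  obtain ⟨W, hW, hWn⟩ :
      ∃ W ⊆ Set.range (Sum.inl : Fin (n + k + 3) → _ ⊕ ((Fin (k + 2) × Fin 3) ⊕ Fin 2)),
        W.ncard = n :=
    Set.exists_subset_card_eq
      (by rw [Set.ncard_range_of_injective Sum.inl_injective, Nat.card_fin]; omega)
  have hK₂ : ∀ t : Fin 2, Sum.inr (Sum.inr t) ∉ W := fun t ht => by
    obtain ⟨x, hx⟩ := hW ht
    exact Sum.inl_ne_inr hx
  exact not_hasK2OddCycleFactor_exampleGraph2MinusEdge_delVerts hW hWn
    (hcrit W hWn _ _ (hK₂ 0) (hK₂ 1) (by simp [exampleGraph2, SimpleGraph.join]))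

/-- For `n ≥ k+1`, the graph `G = K_{n+k+3} + ((k+2)K₃ ∪ K₂)` is not
a `({K₂, C_{2i+1} | i ≥ 2}, n)`-factor critical avoidable graph: taking `W` to be `n`
vertices of the `K_{n+k+3}` part, `e` the edge of the `K₂` part, and `X` the remaining
`k+3` vertices of the `K_{n+k+3}` part, one has `c_tc((G−W−e)−X) = k+4 > k+3 = |X|` and
`G−W−e` has no such factor. -/
theorem statement16 (n k : ℕ) (hnk : k + 1 ≤ n) :
    (∀ W X : Set (Fin (n + k + 3) ⊕ ((Fin (k + 2) × Fin 3) ⊕ Fin 2)),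
      W ⊆ Set.range Sum.inl → X ⊆ Set.range Sum.inl → Disjoint W X →
      W.ncard = n → X.ncard = k + 3 → W ∪ X = Set.range Sum.inl →
      ctcCount (((exampleGraph2 n k).deleteEdges
          {s(Sum.inr (Sum.inr 0), Sum.inr (Sum.inr 1))}).delVerts (W ∪ X)) = k + 4 ∧
      ¬ HasK2OddCycleFactor (((exampleGraph2 n k).deleteEdges
          {s(Sum.inr (Sum.inr 0), Sum.inr (Sum.inr 1))}).delVerts W)) ∧
    ¬ K2OddCycleFactorCriticalAvoidable (exampleGraph2 n k) n :=
  statement16_general n k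
end
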